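/- Let f: R^d → R be self-concordant with minimizer x_* and Hessian H_* = ∇²f(x_*). If ‖x − x_*‖_* < 1, then ‖H_*⁻¹∇f(x)‖_* ≤ ‖x − x_*‖_* / (1 − ‖x − x_*‖_*). -/

import Mathlib

open Matrix MeasureTheory Filter
open scoped Classical

noncomputable section

/-- Vectors in `ℝ^d` with the Euclidean (2-)norm. -/
abbrev Vec (d : ℕ) := EuclideanSpace ℝ (Fin d)

/-- Matrix square root of a positive semidefinite matrix (junk value `0` otherwise). -/
noncomputable def msqrt {d : ℕ} (M : Matrix (Fin d) (Fin d) ℝ) : Matrix (Fin d) (Fin d) ℝ :=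
  if h : M.PosSemidef then
    (h.1.eigenvectorUnitary : Matrix (Fin d) (Fin d) ℝ) *
      diagonal (fun i => Real.sqrt (h.1.eigenvalues i)) *
      (star h.1.eigenvectorUnitary : Matrix (Fin d) (Fin d) ℝ)
  else 0

/-- Frobenius norm of a square matrix. -/
noncomputable def frobNorm {d : ℕ} (M : Matrix (Fin d) (Fin d) ℝ) : ℝ :=
  Real.sqrt (Matrix.trace (Mᵀ * M))

/-- Weighted Frobenius norm `‖W‖_{F(H)} = ‖H^{1/2} W H^{1/2}‖_F`. -/
noncomputable def wFrob {d : ℕ} (H W : Matrix (Fin d) (Fin d) ℝ) : ℝ :=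
  frobNorm (msqrt H * W * msqrt H)

/-- Local norm `‖v‖_H = √⟨H v, v⟩`. -/
noncomputable def localNorm {d : ℕ} (H : Matrix (Fin d) (Fin d) ℝ) (v : Vec d) : ℝ :=
  Real.sqrt (inner ℝ (Matrix.toEuclideanLin H v) v : ℝ)

/-- `f` is self-concordant, expressed through its Hessian map `Hf`:
the Hessian is everywhere positive definite and the local norms at nearby points are
comparable. -/
def SelfConcordant {d : ℕ} (Hf : Vec d → Matrix (Fin d) (Fin d) ℝ) : Prop :=
  (∀ x, (Hf x).PosDef) ∧
  ∀ x y v : Vec d, localNorm (Hf x) (y - x) < 1 → v ≠ 0 →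
    1 - localNorm (Hf x) (y - x) ≤ localNorm (Hf y) v / localNorm (Hf x) v ∧
      localNorm (Hf y) v / localNorm (Hf x) v ≤ 1 / (1 - localNorm (Hf x) (y - x))

/-- `g` is the gradient of `f` and `Hf` is its Hessian (the derivative of the gradient). -/
def IsGradHess {d : ℕ} (f : Vec d → ℝ) (g : Vec d → Vec d)
    (Hf : Vec d → Matrix (Fin d) (Fin d) ℝ) : Prop :=
  (∀ x, HasGradientAt f (g x) x) ∧
  ∀ x, HasFDerivAt g (Matrix.toEuclideanCLM (𝕜 := ℝ) (Hf x) : Vec d →L[ℝ] Vec d) x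

/-- Smallest eigenvalue of a symmetric matrix, via the Rayleigh quotient. -/
noncomputable def lambdaMin {d : ℕ} (M : Matrix (Fin d) (Fin d) ℝ) : ℝ :=
  ⨅ v : {v : Vec d // ‖v‖ = 1}, (inner ℝ (Matrix.toEuclideanLin M v.1) v.1 : ℝ)

/-- Entrywise expectation of a random matrix. -/
noncomputable def expMat {Ω : Type*} [MeasurableSpace Ω] (μ : Measure Ω)
    {m n : ℕ} (M : Ω → Matrix (Fin m) (Fin n) ℝ) : Matrix (Fin m) (Fin n) ℝ :=
  Matrix.of fun i j => ∫ ω, M ω i j ∂μ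

/-- The projection matrix `Z = H^{1/2} S (Sᵀ H S)⁻¹ Sᵀ H^{1/2}`. -/
noncomputable def sketchProj {d τ : ℕ} (H : Matrix (Fin d) (Fin d) ℝ)
    (S : Matrix (Fin d) (Fin τ) ℝ) : Matrix (Fin d) (Fin d) ℝ :=
  msqrt H * S * (Sᵀ * H * S)⁻¹ * Sᵀ * msqrt H

/-- The (randomized) BFGS update
`BFGS(B, H, S) = G + (I - G H) B (I - H G)` with `G = S (Sᵀ H S)⁻¹ Sᵀ`. -/
noncomputable def bfgsUpdate {d τ : ℕ} (B H : Matrix (Fin d) (Fin d) ℝ)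
    (S : Matrix (Fin d) (Fin τ) ℝ) : Matrix (Fin d) (Fin d) ℝ :=
  S * (Sᵀ * H * S)⁻¹ * Sᵀ +
    (1 - S * (Sᵀ * H * S)⁻¹ * Sᵀ * H) * B * (1 - H * (S * (Sᵀ * H * S)⁻¹ * Sᵀ))

/-- Spectral (operator 2-)norm of a matrix. -/
noncomputable def opNorm2 {d : ℕ} (M : Matrix (Fin d) (Fin d) ℝ) : ℝ :=
  ‖(Matrix.toEuclideanCLM (𝕜 := ℝ) M : Vec d →L[ℝ] Vec d)‖

instance matrixMeasurableSpace {m n : Type*} : MeasurableSpace (Matrix m n ℝ) :=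
  MeasurableSpace.pi

/-- The sketching matrices `S k` are i.i.d. samples from a common distribution `D`. -/
def IIDSketch {d τ : ℕ} {Ω : Type*} [MeasurableSpace Ω] (μ : Measure Ω)
    (S : ℕ → Ω → Matrix (Fin d) (Fin τ) ℝ) : Prop :=
  (∀ k, Measurable (S k)) ∧
  ProbabilityTheory.iIndepFun (m := fun _ => matrixMeasurableSpace) S μ ∧
  ∀ k, Measure.map (S k) μ = Measure.map (S 0) μ

end

/-!
Put `r = x - x_*`, `a = ‖r‖_*`, `v = H_*⁻¹ ∇f(x)` and `L = ‖v‖_*`, so that `L² = ⟪v, ∇f(x)⟫`.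
Since `∇f(x_*) = 0`, the function `ψ t = ⟪v, ∇f(x_* + t r)⟫` vanishes at `0` and equals `L²` at `1`,
and its derivative `⟪v, H(x_* + t r) r⟫` is at most `a L / (1 - t a)²` by Cauchy–Schwarz in the
local norm at `x_* + t r` and the self-concordance comparison with the local norm at `x_*`.
Hence `ψ` stays below the solution `L ((1 - t a)⁻¹ - 1)` of `B' = a L / (1 - t a)²`, `B 0 = 0`,
and `L² ≤ a L / (1 - a)`.
-/

open Matrix

open scoped MatrixOrder

section LocalNorm

variable {d : ℕ} {M : Matrix (Fin d) (Fin d) ℝ}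

theorem inner_toEuclideanLin_eq_dotProduct (M : Matrix (Fin d) (Fin d) ℝ) (u w : Vec d) :
    inner ℝ (toEuclideanLin M u) w = (M *ᵥ u.ofLp) ⬝ᵥ w.ofLp := by
  rw [EuclideanSpace.inner_eq_star_dotProduct, star_trivial, dotProduct_comm]
  rfl

theorem inner_toEuclideanLin_eq_inner_sqrt (hM : M.PosSemidef) (u w : Vec d) :
    inner ℝ (toEuclideanLin M u) w =
      inner ℝ (toEuclideanLin (CFC.sqrt M) u) (toEuclideanLin (CFC.sqrt M) w) := by
  have hsqrt : (CFC.sqrt M)ᵀ = CFC.sqrt M := by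
    simpa using (CFC.sqrt_nonneg M).posSemidef.1.eq
  rw [inner_toEuclideanLin_eq_dotProduct, EuclideanSpace.inner_eq_star_dotProduct,
    dotProduct_comm _ (star _)]
  change _ = (CFC.sqrt M *ᵥ u.ofLp) ⬝ᵥ star (CFC.sqrt M *ᵥ w.ofLp)
  rw [star_trivial, dotProduct_mulVec, ← mulVec_transpose, mulVec_mulVec, hsqrt,
    CFC.sqrt_mul_sqrt_self M hM.nonneg]

theorem localNorm_eq_norm_sqrt (hM : M.PosSemidef) (v : Vec d) :
    localNorm M v = ‖toEuclideanLin (CFC.sqrt M) v‖ := by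
  rw [localNorm, inner_toEuclideanLin_eq_inner_sqrt hM, real_inner_self_eq_norm_sq,
    Real.sqrt_sq (norm_nonneg _)]

theorem localNorm_sq (hM : M.PosSemidef) (v : Vec d) :
    localNorm M v ^ 2 = inner ℝ (toEuclideanLin M v) v := by
  rw [localNorm_eq_norm_sqrt hM, ← real_inner_self_eq_norm_sq,
    inner_toEuclideanLin_eq_inner_sqrt hM]

theorem inner_toEuclideanLin_le_localNorm (hM : M.PosSemidef) (u w : Vec d) :
    inner ℝ (toEuclideanLin M u) w ≤ localNorm M u * localNorm M w := by
  rw [inner_toEuclideanLin_eq_inner_sqrt hM, localNorm_eq_norm_sqrt hM,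
    localNorm_eq_norm_sqrt hM]
  exact real_inner_le_norm _ _

theorem localNorm_smul (hM : M.PosSemidef) (t : ℝ) (v : Vec d) :
    localNorm M (t • v) = |t| * localNorm M v := by
  rw [localNorm_eq_norm_sqrt hM, localNorm_eq_norm_sqrt hM, map_smul, norm_smul,
    Real.norm_eq_abs]

theorem localNorm_nonneg (M : Matrix (Fin d) (Fin d) ℝ) (v : Vec d) : 0 ≤ localNorm M v :=
  Real.sqrt_nonneg _

theorem localNorm_pos (hM : M.PosDef) {v : Vec d} (hv : v ≠ 0) : 0 < localNorm M v := by
  rw [localNorm, Real.sqrt_pos, inner_toEuclideanLin_eq_dotProduct, dotProduct_comm]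
  exact hM.dotProduct_mulVec_pos fun h => hv (WithLp.ofLp_injective 2 h)

theorem localNorm_toEuclideanLin_inv_sq (hM : M.PosDef) (w : Vec d) :
    localNorm M (toEuclideanLin M⁻¹ w) ^ 2 = inner ℝ (toEuclideanLin M⁻¹ w) w := by
  have hMM : toEuclideanLin M (toEuclideanLin M⁻¹ w) = w := by
    apply WithLp.ofLp_injective 2
    change M *ᵥ (M⁻¹ *ᵥ w.ofLp) = w.ofLp
    rw [mulVec_mulVec, mul_nonsing_inv M (isUnit_iff_ne_zero.mpr hM.det_pos.ne'), one_mulVec]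
  rw [localNorm_sq hM.posSemidef, hMM, real_inner_comm]

end LocalNorm

namespace SelfConcordant

variable {d : ℕ} {Hf : Vec d → Matrix (Fin d) (Fin d) ℝ} {x y : Vec d}

theorem localNorm_le_div (hsc : SelfConcordant Hf) (hxy : localNorm (Hf x) (y - x) < 1)
    (w : Vec d) :
    localNorm (Hf y) w ≤ localNorm (Hf x) w / (1 - localNorm (Hf x) (y - x)) := by
  rcases eq_or_ne w 0 with rfl | hw
  · simp [localNorm]
  have hgap : 0 < 1 - localNorm (Hf x) (y - x) := sub_pos.mpr hxy
  have hratio := (hsc.2 x y w hxy hw).2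
  rwa [div_le_div_iff₀ (localNorm_pos (hsc.1 x) hw) hgap, one_mul, ← le_div_iff₀ hgap] at hratio

theorem inner_hessian_le (hsc : SelfConcordant Hf) (hxy : localNorm (Hf x) (y - x) < 1)
    (u w : Vec d) :
    inner ℝ (toEuclideanLin (Hf y) u) w ≤
      localNorm (Hf x) u * localNorm (Hf x) w / (1 - localNorm (Hf x) (y - x)) ^ 2 := by
  calc inner ℝ (toEuclideanLin (Hf y) u) w ≤ localNorm (Hf y) u * localNorm (Hf y) w :=
        inner_toEuclideanLin_le_localNorm (hsc.1 y).posSemidef u w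
    _ ≤ localNorm (Hf x) u / (1 - localNorm (Hf x) (y - x)) *
          (localNorm (Hf x) w / (1 - localNorm (Hf x) (y - x))) :=
        mul_le_mul (hsc.localNorm_le_div hxy u) (hsc.localNorm_le_div hxy w)
          (localNorm_nonneg _ _) (div_nonneg (localNorm_nonneg _ _) (sub_pos.mpr hxy).le)
    _ = _ := by rw [div_mul_div_comm, sq]

end SelfConcordant

theorem hasDerivAt_inv_one_sub_mul {a t : ℝ} (ht : 1 - t * a ≠ 0) :
    HasDerivAt (fun s : ℝ => (1 - s * a)⁻¹) (a / (1 - t * a) ^ 2) t := by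
  have hden : HasDerivAt (fun s : ℝ => 1 - s * a) (-a) t := by
    simpa using ((hasDerivAt_id t).mul_const a).const_sub 1
  exact (hden.inv ht).congr_deriv (by ring)

section Gradient

variable {d : ℕ} {g : Vec d → Vec d} {Hf : Vec d → Matrix (Fin d) (Fin d) ℝ}

theorem hasDerivAt_inner_apply_add_smul
    (hg : ∀ z, HasFDerivAt g (toEuclideanCLM (𝕜 := ℝ) (Hf z) : Vec d →L[ℝ] Vec d) z)
    (x r v : Vec d) (t : ℝ) :
    HasDerivAt (fun s : ℝ => inner ℝ v (g (x + s • r)))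
      (inner ℝ v (toEuclideanLin (Hf (x + t • r)) r)) t := by
  have hline : HasDerivAt (fun s : ℝ => x + s • r) r t := by
    simpa using ((hasDerivAt_id t).smul_const r).const_add x
  have hcomp := (hg (x + t • r)).comp_hasDerivAt t hline
  exact (innerSL ℝ v).hasFDerivAt.comp_hasDerivAt t hcomp

theorem SelfConcordant.inner_sub_le (hsc : SelfConcordant Hf)
    (hg : ∀ z, HasFDerivAt g (toEuclideanCLM (𝕜 := ℝ) (Hf z) : Vec d →L[ℝ] Vec d) z)
    {x y : Vec d} (hxy : localNorm (Hf x) (y - x) < 1) (v : Vec d) :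
    inner ℝ v (g y - g x) ≤
      localNorm (Hf x) (y - x) * localNorm (Hf x) v / (1 - localNorm (Hf x) (y - x)) := by
  set r := y - x
  set a := localNorm (Hf x) r
  set L := localNorm (Hf x) v
  have ha : 0 ≤ a := localNorm_nonneg _ _
  have hgap : ∀ t ∈ Set.Icc (0 : ℝ) 1, 0 < 1 - t * a := fun t ht => by nlinarith [ht.2]
  set ψ : ℝ → ℝ := fun t => inner ℝ v (g (x + t • r))
  have hψ := hasDerivAt_inner_apply_add_smul hg x r v
  set B : ℝ → ℝ := fun t => ψ 0 + L * ((1 - t * a)⁻¹ - 1)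
  have hB : ∀ t ∈ Set.Icc (0 : ℝ) 1, HasDerivAt B (a * L / (1 - t * a) ^ 2) t := fun t ht =>
    ((((hasDerivAt_inv_one_sub_mul (hgap t ht).ne').sub_const 1).const_mul L).const_add
      (ψ 0)).congr_deriv (by ring)
  have hψ'_le : ∀ t ∈ Set.Icc (0 : ℝ) 1,
      inner ℝ v (toEuclideanLin (Hf (x + t • r)) r) ≤ a * L / (1 - t * a) ^ 2 := by
    intro t ht
    have hdist : localNorm (Hf x) (x + t • r - x) = t * a := by
      rw [add_sub_cancel_left, localNorm_smul (hsc.1 x).posSemidef, abs_of_nonneg ht.1]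
    have hbound := hsc.inner_hessian_le (hdist ▸ (sub_pos.mp (hgap t ht))) r v
    rwa [hdist, real_inner_comm] at hbound
  have hψB : ψ 1 ≤ B 1 :=
    image_le_of_deriv_right_le_deriv_boundary
      (fun t _ => (hψ t).continuousAt.continuousWithinAt)
      (fun t _ => (hψ t).hasDerivWithinAt) (by simp [B, ψ])
      (fun t ht => (hB t ht).continuousAt.continuousWithinAt)
      (fun t ht => (hB t (Set.Ico_subset_Icc_self ht)).hasDerivWithinAt)
      (fun t ht => hψ'_le t (Set.Ico_subset_Icc_self ht)) ⟨zero_le_one, le_rfl⟩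
  have hψ1 : ψ 1 = inner ℝ v (g y) := by simp [ψ, r]
  have hψ0 : ψ 0 = inner ℝ v (g x) := by simp [ψ]
  have hB1 : B 1 - ψ 0 = a * L / (1 - a) := by
    have : 1 - a ≠ 0 := (sub_pos.mpr hxy).ne'
    simp only [B, one_mul]
    field_simp
    ring
  rw [inner_sub_right, ← hψ1, ← hψ0]
  linarith

end Gradient

/-- **Bound on `‖H_*⁻¹ ∇f(x)‖_*` for self-concordant `f`.** -/
theorem inv_hessian_grad_bound_self_concordant
    {d : ℕ} (f : Vec d → ℝ) (g : Vec d → Vec d) (Hf : Vec d → Matrix (Fin d) (Fin d) ℝ)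
    (hfgH : IsGradHess f g Hf) (hsc : SelfConcordant Hf)
    (xstar : Vec d) (hmin : ∀ y, f xstar ≤ f y)
    (x : Vec d) (hx : localNorm (Hf xstar) (x - xstar) < 1) :
    localNorm (Hf xstar) (Matrix.toEuclideanLin (Hf xstar)⁻¹ (g x)) ≤
      localNorm (Hf xstar) (x - xstar) / (1 - localNorm (Hf xstar) (x - xstar)) := by
  obtain ⟨hgrad, hhess⟩ := hfgH
  have hmin_loc : IsLocalMin f xstar := Filter.Eventually.of_forall hmin
  have hg0 : g xstar = 0 := (InnerProductSpace.toDual ℝ (Vec d)).map_eq_zero_iff.mp <|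
    hmin_loc.hasFDerivAt_eq_zero (hgrad xstar).hasFDerivAt
  have hsq := hsc.inner_sub_le hhess hx (toEuclideanLin (Hf xstar)⁻¹ (g x))
  rw [hg0, sub_zero, ← localNorm_toEuclideanLin_inv_sq (hsc.1 xstar), mul_comm, mul_div_assoc]
    at hsq
  set a := localNorm (Hf xstar) (x - xstar)
  set L := localNorm (Hf xstar) (toEuclideanLin (Hf xstar)⁻¹ (g x))
  have hL : 0 ≤ L := localNorm_nonneg _ _
  have hc : 0 ≤ a / (1 - a) := div_nonneg (localNorm_nonneg _ _) (sub_pos.mpr hx).le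
  nlinarith
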